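/- Let C ↔ f : [a,b] → ℝ^M (a < b) be a continuous and rectifiable curve and assume M ≥ 2. Then the M-dimensional Lebesgue measure of the graph [C] = f([a,b]) ⊂ ℝ^M is equal to 0. -/

import Mathlib

/-!
A curve of finite length has bounded variation, so its arclength reparametrization is
1-Lipschitz and has the same graph. The graph is therefore a Lipschitz image of a subset of `ℝ`,
of Hausdorff dimension at most `1 < M`, and such a set is null for every additive Haar measure
on `ℝ^M`, Lebesgue measure included.
-/

open scoped BigOperators ENNReal
open MeasureTheory Filter

noncomputable section

/-- A partition `a = x 0 < x 1 < ⋯ < x n = b` of the interval `[a,b]`. -/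
structure CurvePartition (a b : ℝ) where
  n : ℕ
  x : Fin (n + 1) → ℝ
  mono : StrictMono x
  first : x 0 = a
  last : x (Fin.last n) = b

/-- The mesh `‖P‖ = maxᵢ (xᵢ − xᵢ₋₁)` of a partition. -/
def CurvePartition.mesh {a b : ℝ} (P : CurvePartition a b) : ℝ :=
  ⨆ i : Fin P.n, (P.x i.succ - P.x i.castSucc)

/-- The inscribed sum `V(f;P) = Σᵢ ‖f(xᵢ) − f(xᵢ₋₁)‖`. -/
def inscribedSum {M : ℕ} (f : ℝ → EuclideanSpace ℝ (Fin M)) {a b : ℝ}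
    (P : CurvePartition a b) : ℝ :=
  ∑ i : Fin P.n, ‖f (P.x i.succ) - f (P.x i.castSucc)‖

/-- The length `ℓ(C)` of the curve `C ↔ f : [a,b] → ℝ^M`: the supremum of the inscribed sums
over all partitions of `[a,b]`, a value in `[0,+∞]`. -/
def curveLength {M : ℕ} (f : ℝ → EuclideanSpace ℝ (Fin M)) (a b : ℝ) : ℝ≥0∞ :=
  ⨆ P : CurvePartition a b, ENNReal.ofReal (inscribedSum f P)

/-- The total variation `T_h[a,b]` of a real function `h` on `[a,b]`. -/
def totalVariation (h : ℝ → ℝ) (a b : ℝ) : ℝ≥0∞ :=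
  ⨆ P : CurvePartition a b, ENNReal.ofReal (∑ i : Fin P.n, |h (P.x i.succ) - h (P.x i.castSucc)|)

/-- The positive variation `T_h⁺[a,b]` of a real function `h` on `[a,b]`. -/
def posVariation (h : ℝ → ℝ) (a b : ℝ) : ℝ≥0∞ :=
  ⨆ P : CurvePartition a b,
    ENNReal.ofReal (∑ i : Fin P.n, max (h (P.x i.succ) - h (P.x i.castSucc)) 0)

/-- The negative variation `T_h⁻[a,b]` of a real function `h` on `[a,b]`. -/
def negVariation (h : ℝ → ℝ) (a b : ℝ) : ℝ≥0∞ :=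
  ⨆ P : CurvePartition a b,
    ENNReal.ofReal (∑ i : Fin P.n, max (h (P.x i.castSucc) - h (P.x i.succ)) 0)

/-- `h` is absolutely continuous on `[a,b]`: for every `ε > 0` there is `δ > 0` such that
`Σᵢ |h(vᵢ) − h(uᵢ)| < ε` for every finite family of pairwise non-overlapping subintervals
`[uᵢ,vᵢ]` of `[a,b]` of total length `< δ`. -/
def AbsContOn (h : ℝ → ℝ) (a b : ℝ) : Prop :=
  ∀ ε > (0 : ℝ), ∃ δ > (0 : ℝ), ∀ n : ℕ, ∀ u v : Fin n → ℝ,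
    (∀ i, a ≤ u i ∧ u i ≤ v i ∧ v i ≤ b) →
    (∀ i j, i ≠ j → Set.Ioo (u i) (v i) ∩ Set.Ioo (u j) (v j) = ∅) →
    (∑ i, (v i - u i)) < δ → (∑ i, |h (v i) - h (u i)|) < ε

/-- `φ` is an increasing homeomorphism of `[a,b]` onto `[c,d]` sending `a` to `c` and `b` to `d`. -/
def IsIncrHomeo (φ : ℝ → ℝ) (a b c d : ℝ) : Prop :=
  ContinuousOn φ (Set.Icc a b) ∧ StrictMonoOn φ (Set.Icc a b) ∧ φ a = c ∧ φ b = d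

/-- `f : [a,b] → ℝ^M` and `g : [c,d] → ℝ^M` are Fréchet equivalent. -/
def FrechetEquiv {M : ℕ} (f : ℝ → EuclideanSpace ℝ (Fin M)) (a b : ℝ)
    (g : ℝ → EuclideanSpace ℝ (Fin M)) (c d : ℝ) : Prop :=
  ∀ ε > (0 : ℝ), ∃ φ : ℝ → ℝ, IsIncrHomeo φ a b c d ∧
    ∀ x ∈ Set.Icc a b, ‖f x - g (φ x)‖ < ε

/-- The Fréchet distance between the curves `C ↔ f : [a,b] → ℝ^M` and `D ↔ g : [c,d] → ℝ^M`. -/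
def frechetDist {M : ℕ} (f : ℝ → EuclideanSpace ℝ (Fin M)) (a b : ℝ)
    (g : ℝ → EuclideanSpace ℝ (Fin M)) (c d : ℝ) : ℝ :=
  ⨅ φ : {φ : ℝ → ℝ // IsIncrHomeo φ a b c d}, ⨆ x ∈ Set.Icc a b, ‖f x - g (φ.1 x)‖

/-- A parametric integrand: a continuous `F : ℝ^M × ℝ^M → ℝ` positively homogeneous of
degree 1 in the second variable. -/
def IsParametricIntegrand {M : ℕ}
    (F : EuclideanSpace ℝ (Fin M) → EuclideanSpace ℝ (Fin M) → ℝ) : Prop :=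
  Continuous (fun p : EuclideanSpace ℝ (Fin M) × EuclideanSpace ℝ (Fin M) => F p.1 p.2) ∧
  ∀ K : ℝ, 0 ≤ K → ∀ x t, F x (K • t) = K * F x t

/-- `L` is the line integral `∫_C F` of `F` along the curve `C ↔ f : [a,b] → ℝ^M`:
the limit, as the mesh tends to `0`, of the Riemann-type sums
`Σᵢ F(f(ξᵢ), f(xᵢ) − f(xᵢ₋₁))` over tagged partitions of `[a,b]`. -/
def IsLineIntegral {M : ℕ} (F : EuclideanSpace ℝ (Fin M) → EuclideanSpace ℝ (Fin M) → ℝ)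
    (f : ℝ → EuclideanSpace ℝ (Fin M)) (a b : ℝ) (L : ℝ) : Prop :=
  ∀ ε > (0 : ℝ), ∃ δ > (0 : ℝ), ∀ P : CurvePartition a b, P.mesh < δ →
    ∀ ξ : Fin P.n → ℝ, (∀ i, ξ i ∈ Set.Icc (P.x i.castSucc) (P.x i.succ)) →
    |(∑ i : Fin P.n, F (f (ξ i)) (f (P.x i.succ) - f (P.x i.castSucc))) - L| < ε

open Set
open scoped NNReal

namespace CurvePartition

variable {a b : ℝ}

lemma range_x_subset_Icc (P : CurvePartition a b) : range P.x ⊆ Icc a b := by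
  rintro _ ⟨i, rfl⟩
  exact ⟨P.first.symm.trans_le (P.mono.monotone (Fin.zero_le i)),
    (P.mono.monotone (Fin.le_last i)).trans_eq P.last⟩

lemma exists_subset_range_x {S : Set ℝ} (hS : S.Finite) (hSab : S ⊆ Icc a b) (hab : a ≤ b) :
    ∃ P : CurvePartition a b, S ⊆ range P.x := by
  classical
  set T : Finset ℝ := insert a (insert b hS.toFinset)
  have hTab : ∀ x ∈ T, x ∈ Icc a b := by
    simp only [T, Finset.mem_insert, Set.Finite.mem_toFinset]
    rintro x (rfl | rfl | hx)
    exacts [⟨le_rfl, hab⟩, ⟨hab, le_rfl⟩, hSab hx]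
  have hcard : T.card = T.card - 1 + 1 :=
    (Nat.succ_pred_eq_of_pos (Finset.card_pos.2 ⟨a, Finset.mem_insert_self _ _⟩)).symm
  set x := T.orderEmbOfFin hcard
  have hx : ∀ i, x i ∈ Icc a b := fun i => hTab _ (T.orderEmbOfFin_mem hcard i)
  obtain ⟨i, hi⟩ : a ∈ range x := by simp [x, T]
  obtain ⟨j, hj⟩ : b ∈ range x := by simp [x, T]
  refine ⟨⟨T.card - 1, x, x.strictMono, ?_, ?_⟩, ?_⟩
  · exact le_antisymm (hi ▸ x.monotone (Fin.zero_le i)) (hx 0).1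
  · exact le_antisymm (hx _).2 (hj ▸ x.monotone (Fin.le_last j))
  · intro y hy
    simp [x, T, hy]

end CurvePartition

lemma ofReal_inscribedSum_eq_eVariationOn {M : ℕ} (f : ℝ → EuclideanSpace ℝ (Fin M))
    {a b : ℝ} (P : CurvePartition a b) :
    ENNReal.ofReal (inscribedSum f P) = eVariationOn f (range P.x) := by
  set w : ℕ → ℝ := fun j => P.x ⟨min j P.n, Nat.lt_succ_of_le (min_le_right _ _)⟩
  have hw : Monotone w := fun i j hij => P.mono.monotone (Fin.mk_le_mk.2 (min_le_min_right _ hij))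
  have hrange : range P.x = w '' Iic P.n := by
    ext x
    constructor
    · rintro ⟨i, rfl⟩
      exact ⟨i, i.is_le, by simp [w, i.is_le]⟩
    · rintro ⟨j, -, rfl⟩
      exact ⟨_, rfl⟩
  rw [hrange, eVariationOn.image_range_of_monotone f hw, inscribedSum,
    ENNReal.ofReal_sum_of_nonneg fun _ _ => norm_nonneg _,
    ← Fin.sum_univ_eq_sum_range (fun j => edist (f (w j)) (f (w (j + 1))))]
  refine Finset.sum_congr rfl fun i _ => ?_
  have hcast : w i = P.x i.castSucc := by simp [w, Fin.castSucc, Fin.castAdd, Fin.castLE]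
  have hsucc : w (i + 1) = P.x i.succ := by simp [w, Fin.succ, Nat.succ_le_of_lt i.isLt]
  rw [hcast, hsucc, edist_comm, edist_dist, dist_eq_norm]

theorem curveLength_eq_eVariationOn {M : ℕ} (f : ℝ → EuclideanSpace ℝ (Fin M)) {a b : ℝ}
    (hab : a ≤ b) : curveLength f a b = eVariationOn f (Icc a b) := by
  refine le_antisymm (iSup_le fun P => ?_) (iSup_le ?_)
  · rw [ofReal_inscribedSum_eq_eVariationOn]
    exact eVariationOn.mono f P.range_x_subset_Icc
  · rintro ⟨n, u, hu, us⟩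
    obtain ⟨P, hP⟩ := CurvePartition.exists_subset_range_x ((finite_Iic n).image u)
      (image_subset_iff.2 fun i _ => us i) hab
    calc ∑ i ∈ Finset.range n, edist (f (u (i + 1))) (f (u i))
        = eVariationOn f (u '' Iic n) := by
          simp only [eVariationOn.image_range_of_monotone f hu, edist_comm]
      _ ≤ eVariationOn f (range P.x) := eVariationOn.mono f hP
      _ = ENNReal.ofReal (inscribedSum f P) := (ofReal_inscribedSum_eq_eVariationOn f P).symm
      _ ≤ curveLength f a b := le_iSup (fun P => ENNReal.ofReal (inscribedSum f P)) P

lemma HasConstantSpeedOnWith.lipschitzOnWith {E : Type*} [PseudoEMetricSpace E] {f : ℝ → E}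
    {s : Set ℝ} {l : ℝ≥0} (hf : HasConstantSpeedOnWith f s l) : LipschitzOnWith l f s := by
  refine fun x hx y hy => ?_
  wlog hxy : x ≤ y generalizing x y
  · rw [edist_comm, edist_comm x]
    exact this y hy x hx (le_of_not_ge hxy)
  calc edist (f x) (f y) ≤ eVariationOn f (s ∩ Icc x y) :=
        eVariationOn.edist_le f ⟨hx, le_rfl, hxy⟩ ⟨hy, hxy, le_rfl⟩
    _ = ENNReal.ofReal (l * (y - x)) := hf hx hy
    _ = l * edist x y := by
        rw [ENNReal.ofReal_mul l.coe_nonneg, ENNReal.ofReal_coe_nnreal, edist_comm,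
          edist_dist, Real.dist_eq, abs_of_nonneg (sub_nonneg.2 hxy)]

lemma LocallyBoundedVariationOn.image_eq_naturalParameterization_image {α E : Type*}
    [LinearOrder α] [EMetricSpace E] {f : α → E} {s : Set α}
    (hf : LocallyBoundedVariationOn f s) {a : α} (ha : a ∈ s) :
    f '' s = naturalParameterization f s a '' (variationOnFromTo f s a '' s) := by
  rw [← image_comp]
  refine image_congr fun x hx => ?_
  exact (edist_eq_zero.1 (edist_naturalParameterization_eq_zero hf ha hx)).symm

lemma LocallyBoundedVariationOn.dimH_image_le_one {α E : Type*} [LinearOrder α] [EMetricSpace E]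
    {f : α → E} {s : Set α} (hf : LocallyBoundedVariationOn f s) : dimH (f '' s) ≤ 1 := by
  rcases s.eq_empty_or_nonempty with rfl | ⟨a, ha⟩
  · simp
  rw [hf.image_eq_naturalParameterization_image ha]
  calc _ ≤ dimH (variationOnFromTo f s a '' s) :=
        (has_unit_speed_naturalParameterization f hf ha).lipschitzOnWith.dimH_image_le
    _ ≤ dimH (univ : Set ℝ) := dimH_mono (subset_univ _)
    _ = 1 := Real.dimH_univ

lemma measure_eq_zero_of_dimH_lt_finrank {E : Type*} [NormedAddCommGroup E] [NormedSpace ℝ E]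
    [FiniteDimensional ℝ E] [MeasurableSpace E] [BorelSpace E] (μ : Measure E)
    [μ.IsAddHaarMeasure] {s : Set E} (hs : dimH s < Module.finrank ℝ E) : μ s = 0 :=
  Measure.absolutelyContinuous_isAddHaarMeasure μ μH[Module.finrank ℝ E]
    (hausdorffMeasure_of_dimH_lt (d := Module.finrank ℝ E) (by exact_mod_cast hs))

theorem volume_graph_eq_zero_general {M : ℕ} (hM : 2 ≤ M) (a b : ℝ) (hab : a < b)
    (f : ℝ → EuclideanSpace ℝ (Fin M))
    (hrect : curveLength f a b < ⊤) :
    volume (f '' Set.Icc a b) = 0 := by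
  have hbv : BoundedVariationOn f (Icc a b) := by
    rw [BoundedVariationOn, ← curveLength_eq_eVariationOn f hab.le]
    exact hrect.ne
  refine measure_eq_zero_of_dimH_lt_finrank volume
    (hbv.locallyBoundedVariationOn.dimH_image_le_one.trans_lt ?_)
  rw [finrank_euclideanSpace_fin]
  exact_mod_cast hM

/-- For a continuous rectifiable curve `C ↔ f : [a,b] → ℝ^M` with `M ≥ 2`, the
`M`-dimensional Lebesgue measure of the graph `[C] = f([a,b])` is `0`. -/
theorem volume_graph_eq_zero {M : ℕ} (hM : 2 ≤ M) (a b : ℝ) (hab : a < b)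
    (f : ℝ → EuclideanSpace ℝ (Fin M))
    (hcont : ContinuousOn f (Set.Icc a b)) (hrect : curveLength f a b < ⊤) :
    volume (f '' Set.Icc a b) = 0 :=
  volume_graph_eq_zero_general hM a b hab f hrect

end
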